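/- arXiv:1202.1022 — 3 statements merged into one kernel-verified Lean document; each statement's English description precedes it below -/
import Mathlib

section
/- For every real number t with 0 < t ≤ π, one has 3·sin t/(1 − cos t) + 2·(3π)^(2/3)·(1 − cos t)^(1/3) ≥ 2·2^(1/3)·(3π)^(2/3). -/
/-!
With `s = sin (t/2)`, `c = cos (t/2)` and `u = s^(2/3)`, the left-hand side is `3 c / s + K u`
where `K = 2 · 2^(1/3) · (3π)^(2/3)` is the right-hand side. So the claim is `K s (1 - u) ≤ 3 c`;
both sides are nonnegative, and after squaring (with `s² = u³`, `c² = 1 - u³`) it becomes the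
polynomial inequality `K² u³ (1 - u)² ≤ 9 (1 - u³)` on `[0, 1]`, which holds because
`K³ = 144 π²` gives `K² ≤ 127`.
-/

open Real

lemma cube_mul_one_sub_sq_le {u : ℝ} (hu0 : 0 ≤ u) (hu1 : u ≤ 1) :
    127 * u ^ 3 * (1 - u) ^ 2 ≤ 9 * (1 - u ^ 3) := by
  -- `u³ (1 - u)` is maximal at `u = 3/4`
  have h : 127 * u ^ 3 * (1 - u) ≤ 9 * (1 + u + u ^ 2) := by
    nlinarith [mul_nonneg hu0 hu0, mul_nonneg (mul_nonneg hu0 hu0) (sq_nonneg (u - 3 / 4)),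
      mul_nonneg hu0 (sq_nonneg (u - 3 / 4))]
  have h1u : 0 ≤ 1 - u := by linarith
  calc 127 * u ^ 3 * (1 - u) ^ 2 = (127 * u ^ 3 * (1 - u)) * (1 - u) := by ring
    _ ≤ 9 * (1 + u + u ^ 2) * (1 - u) := mul_le_mul_of_nonneg_right h h1u
    _ = 9 * (1 - u ^ 3) := by ring

lemma rpow_div_three_pow_three {x : ℝ} (hx : 0 ≤ x) (a : ℝ) : (x ^ (a / 3)) ^ 3 = x ^ a := by
  rw [← rpow_natCast, ← rpow_mul hx]
  norm_num

lemma isoperimetric_const_pow_three :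
    (2 * (2 : ℝ) ^ ((1 : ℝ) / 3) * (3 * π) ^ ((2 : ℝ) / 3)) ^ 3 = 144 * π ^ 2 := by
  rw [mul_pow, mul_pow, rpow_div_three_pow_three zero_le_two,
    rpow_div_three_pow_three (by positivity), rpow_one, rpow_two]
  ring

lemma isoperimetric_const_sq_le :
    (2 * (2 : ℝ) ^ ((1 : ℝ) / 3) * (3 * π) ^ ((2 : ℝ) / 3)) ^ 2 ≤ 127 := by
  set K := 2 * (2 : ℝ) ^ ((1 : ℝ) / 3) * (3 * π) ^ ((2 : ℝ) / 3)
  have hπ : π < 3.15 := pi_lt_d2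
  have hcube : (K ^ 2) ^ 3 ≤ 127 ^ 3 := by
    rw [← pow_mul, mul_comm, pow_mul, isoperimetric_const_pow_three]
    have hπ2 : π ^ 2 < 3.15 ^ 2 := by gcongr
    nlinarith [pi_pos]
  exact (pow_le_pow_iff_left₀ (by positivity) (by norm_num) three_ne_zero).1 hcube

lemma mul_one_sub_rpow_le_div {s c K : ℝ} (hs : 0 < s) (hs1 : s ≤ 1) (hc : 0 ≤ c)
    (hsc : s ^ 2 + c ^ 2 = 1) (hK : 0 ≤ K) (hK127 : K ^ 2 ≤ 127) :
    K * (1 - s ^ ((2 : ℝ) / 3)) ≤ 3 * c / s := by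
  set u := s ^ ((2 : ℝ) / 3)
  have hu0 : 0 ≤ u := by positivity
  have hu1 : u ≤ 1 := rpow_le_one hs.le hs1 (by norm_num)
  have hu3 : u ^ 3 = s ^ 2 := by rw [rpow_div_three_pow_three hs.le, rpow_two]
  rw [le_div_iff₀ hs]
  have hsq : (K * (1 - u) * s) ^ 2 ≤ (3 * c) ^ 2 :=
    calc (K * (1 - u) * s) ^ 2 = K ^ 2 * (u ^ 3 * (1 - u) ^ 2) := by rw [hu3]; ring
      _ ≤ 127 * (u ^ 3 * (1 - u) ^ 2) := by gcongr
      _ ≤ 9 * (1 - u ^ 3) := by linarith [cube_mul_one_sub_sq_le hu0 hu1]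
      _ = (3 * c) ^ 2 := by rw [hu3]; linear_combination -9 * hsc
  have h1u : 0 ≤ 1 - u := by linarith
  exact (pow_le_pow_iff_left₀ (by positivity) (by positivity) two_ne_zero).1 hsq

lemma one_sub_cos_eq_two_mul_sin_half_sq (t : ℝ) : 1 - cos t = 2 * sin (t / 2) ^ 2 := by
  conv_lhs => rw [← mul_div_cancel₀ t two_ne_zero, cos_two_mul, cos_sq']
  ring

lemma sin_div_one_sub_cos_eq (t : ℝ) :
    sin t / (1 - cos t) = cos (t / 2) / sin (t / 2) := by
  rw [one_sub_cos_eq_two_mul_sin_half_sq]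
  conv_lhs => rw [← mul_div_cancel₀ t two_ne_zero, sin_two_mul]
  rcases eq_or_ne (sin (t / 2)) 0 with h | h
  · simp [h]
  · field_simp

theorem stmt3 (t : ℝ) (ht0 : 0 < t) (htpi : t ≤ π) :
    3 * Real.sin t / (1 - Real.cos t)
      + 2 * (3 * π) ^ ((2 : ℝ) / 3) * (1 - Real.cos t) ^ ((1 : ℝ) / 3)
    ≥ 2 * (2 : ℝ) ^ ((1 : ℝ) / 3) * (3 * π) ^ ((2 : ℝ) / 3) := by
  set s := sin (t / 2)
  have hs : 0 < s := sin_pos_of_pos_of_lt_pi (by linarith) (by linarith [pi_pos])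
  have hc : 0 ≤ cos (t / 2) := cos_nonneg_of_mem_Icc ⟨by linarith [pi_pos], by linarith⟩
  have hcbrt : (1 - cos t) ^ ((1 : ℝ) / 3) = (2 : ℝ) ^ ((1 : ℝ) / 3) * s ^ ((2 : ℝ) / 3) := by
    rw [one_sub_cos_eq_two_mul_sin_half_sq, mul_rpow zero_le_two (sq_nonneg s), ← rpow_two,
      ← rpow_mul hs.le]
    norm_num
  have key := mul_one_sub_rpow_le_div hs (sin_le_one _) hc (sin_sq_add_cos_sq _)
    (by positivity) isoperimetric_const_sq_le
  rw [mul_div_assoc] at key ⊢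
  rw [sin_div_one_sub_cos_eq, hcbrt]
  linarith
end

section
/- The infimum over t ∈ (0, π] of the function t ↦ 3·sin t/(1 − cos t) + 2·(3π)^(2/3)·(1 − cos t)^(1/3) equals 2·2^(1/3)·(3π)^(2/3), and this infimum is attained at t = π. -/
/-!
Write `u = 1 - cos t = x³` and `2 = a³` with `a = 2^(1/3)`, and `C = (3π)^(2/3)`. Since
`sin t = √(u (2 - u))`, the claim `f t ≥ f π = 2 a C` is `2 C (a - x) x³ ≤ 3 sin t`; after squaring
and cancelling `a - x` from `a³ - x³` it becomes `4 C² (a - x) x³ ≤ 9 (a² + a x + x²)`. The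
constant `4 C² a² = (20736 π⁴)^(1/3)` is just below `127`, and `127 (a - x) x³ ≤ 9 a² (a² + a x + x²)`
holds on `0 ≤ x ≤ a`.
-/

open Real

lemma quartic_le {a x : ℝ} (hx : 0 ≤ x) (hxa : x ≤ a) :
    127 * (a - x) * x ^ 3 ≤ 9 * a ^ 2 * (a ^ 2 + a * x + x ^ 2) := by
  nlinarith [sq_nonneg (a - x), sq_nonneg (2 * x - a), sq_nonneg (x * (2 * x - a)),
    sq_nonneg (a * (2 * x - a)), sq_nonneg (x ^ 2 - a * x), sq_nonneg a, sq_nonneg x,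
    mul_nonneg hx (sub_nonneg.2 hxa)]

lemma le_div_add_of_sq_eq {a x C s : ℝ} (hx : 0 < x) (hxa : x ≤ a) (hs : 0 ≤ s)
    (hs_sq : s ^ 2 = x ^ 3 * (a ^ 3 - x ^ 3)) (hC : 4 * C ^ 2 * a ^ 2 ≤ 127) :
    2 * a * C ≤ 3 * s / x ^ 3 + 2 * C * x := by
  have ha : 0 < a := hx.trans_le hxa
  have hbound : 4 * C ^ 2 * ((a - x) * x ^ 3) ≤ 9 * (a ^ 2 + a * x + x ^ 2) := by
    refine le_of_mul_le_mul_right ?_ (pow_pos ha 2)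
    calc 4 * C ^ 2 * ((a - x) * x ^ 3) * a ^ 2
        = 4 * C ^ 2 * a ^ 2 * ((a - x) * x ^ 3) := by ring
      _ ≤ 127 * ((a - x) * x ^ 3) := by gcongr
      _ ≤ 9 * (a ^ 2 + a * x + x ^ 2) * a ^ 2 := by linarith [quartic_le hx.le hxa]
  have hsq : (2 * C * (a - x) * x ^ 3) ^ 2 ≤ (3 * s) ^ 2 := by
    calc (2 * C * (a - x) * x ^ 3) ^ 2
        = (a - x) * (4 * C ^ 2 * ((a - x) * x ^ 3)) * x ^ 3 := by ring
      _ ≤ (a - x) * (9 * (a ^ 2 + a * x + x ^ 2)) * x ^ 3 := by gcongr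
      _ = (3 * s) ^ 2 := by rw [mul_pow, hs_sq]; ring
  have hle : 2 * C * (a - x) * x ^ 3 ≤ 3 * s := abs_le_of_sq_le_sq' hsq (by positivity) |>.2
  have hdiv : 2 * C * (a - x) ≤ 3 * s / x ^ 3 := by
    rw [le_div_iff₀ (by positivity)]
    linarith
  linarith

lemma rpow_div_three_pow {u : ℝ} (hu : 0 ≤ u) (k : ℝ) : (u ^ (k / 3)) ^ 3 = u ^ k := by
  rw [← rpow_natCast, ← rpow_mul hu]
  norm_num

lemma pi_pow_four_lt : 20736 * π ^ 4 < 127 ^ 3 := by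
  have hπ : π ^ 4 < 3.1416 ^ 4 := by gcongr; exact pi_lt_d4
  linarith

lemma four_mul_sq_mul_sq_le :
    4 * ((3 * π) ^ ((2 : ℝ) / 3)) ^ 2 * ((2 : ℝ) ^ ((1 : ℝ) / 3)) ^ 2 ≤ 127 := by
  refine le_of_pow_le_pow_left₀ three_ne_zero (by norm_num) ?_
  have hC := rpow_div_three_pow (by positivity : (0 : ℝ) ≤ 3 * π) 2
  have ha := rpow_div_three_pow (by norm_num : (0 : ℝ) ≤ 2) 1
  rw [rpow_two] at hC
  rw [rpow_one] at ha
  calc (4 * ((3 * π) ^ ((2 : ℝ) / 3)) ^ 2 * ((2 : ℝ) ^ ((1 : ℝ) / 3)) ^ 2) ^ 3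
      = 64 * (((3 * π) ^ ((2 : ℝ) / 3)) ^ 3) ^ 2 * (((2 : ℝ) ^ ((1 : ℝ) / 3)) ^ 3) ^ 2 := by ring
    _ = 20736 * π ^ 4 := by rw [hC, ha]; ring
    _ ≤ 127 ^ 3 := pi_pow_four_lt.le

lemma le_objective {t : ℝ} (ht : t ∈ Set.Ioc 0 π) :
    2 * (2 : ℝ) ^ ((1 : ℝ) / 3) * (3 * π) ^ ((2 : ℝ) / 3) ≤
      3 * sin t / (1 - cos t) + 2 * (3 * π) ^ ((2 : ℝ) / 3) * (1 - cos t) ^ ((1 : ℝ) / 3) := by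
  obtain ⟨ht0, htπ⟩ := ht
  have hu : 0 < 1 - cos t := by
    have := cos_lt_cos_of_nonneg_of_le_pi le_rfl htπ ht0
    rw [cos_zero] at this
    linarith
  have hu2 : 1 - cos t ≤ 2 := by linarith [neg_one_le_cos t]
  have hx3 := rpow_div_three_pow hu.le 1
  have ha3 := rpow_div_three_pow (by norm_num : (0 : ℝ) ≤ 2) 1
  rw [rpow_one] at hx3 ha3
  have key := le_div_add_of_sq_eq (C := (3 * π) ^ ((2 : ℝ) / 3)) (s := sin t)
    (rpow_pos_of_pos hu _) (rpow_le_rpow hu.le hu2 (by norm_num))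
    (sin_nonneg_of_nonneg_of_le_pi ht0.le htπ)
    (by rw [hx3, ha3]; nlinarith [sin_sq_add_cos_sq t]) four_mul_sq_mul_sq_le
  rw [hx3] at key
  linarith

theorem stmt4 :
    sInf ((fun t : ℝ =>
        3 * Real.sin t / (1 - Real.cos t)
          + 2 * (3 * π) ^ ((2 : ℝ) / 3) * (1 - Real.cos t) ^ ((1 : ℝ) / 3)) '' Set.Ioc 0 π)
      = 2 * (2 : ℝ) ^ ((1 : ℝ) / 3) * (3 * π) ^ ((2 : ℝ) / 3)
    ∧ 3 * Real.sin π / (1 - Real.cos π)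
        + 2 * (3 * π) ^ ((2 : ℝ) / 3) * (1 - Real.cos π) ^ ((1 : ℝ) / 3)
      = 2 * (2 : ℝ) ^ ((1 : ℝ) / 3) * (3 * π) ^ ((2 : ℝ) / 3) := by
  have hval : 3 * Real.sin π / (1 - Real.cos π)
        + 2 * (3 * π) ^ ((2 : ℝ) / 3) * (1 - Real.cos π) ^ ((1 : ℝ) / 3)
      = 2 * (2 : ℝ) ^ ((1 : ℝ) / 3) * (3 * π) ^ ((2 : ℝ) / 3) := by
    rw [sin_pi, cos_pi]
    ring_nf
  refine ⟨IsLeast.csInf_eq ⟨⟨π, ⟨pi_pos, le_rfl⟩, hval⟩, ?_⟩, hval⟩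
  rintro y ⟨t, ht, rfl⟩
  exact le_objective ht
end

section
/- For every real number v ≥ 27 and every t with 0 < t < π, one has v·sin t/(1 − cos t) + 2·(3π)^(2/3)·v^(2/3)·(1 − cos t)^(1/3) ≥ 2^(4/3)·(3π)^(2/3)·v^(2/3). -/
/-!
Write `c = 1 - cos t ∈ (0, 2)`, `w = c^(1/3)` and `a = 2^(1/3)`. Since `2^(4/3) = 2a`, the claim
says `v sin t / c ≥ 2 (3π)^(2/3) v^(2/3) (a - w)`, and as `v ≥ 3 v^(2/3)` it suffices that
`3 sin t ≥ 2 (3π)^(2/3) c (a - w)`. Both sides are nonnegative, `sin² t = c (2 - c)` and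
`2 - c = a³ - w³ = (a - w)(a² + a w + w²)`, so after squaring this becomes the one-variable
polynomial inequality `4 (3π)^(4/3) w³ (a - w) ≤ 9 (a² + a w + w²)`, with `(3π)^(4/3) ≤ 20`.
-/

open Real

lemma rpow_one_third_pow_three {x : ℝ} (hx : 0 ≤ x) : (x ^ ((1 : ℝ) / 3)) ^ 3 = x := by
  simpa [one_div] using rpow_inv_natCast_pow hx (n := 3) three_ne_zero

lemma three_le_rpow_one_third {v : ℝ} (hv : 27 ≤ v) : 3 ≤ v ^ ((1 : ℝ) / 3) :=
  le_of_pow_le_pow_left₀ three_ne_zero (by positivity)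
    (by rw [rpow_one_third_pow_three (by linarith)]; linarith)

lemma sq_rpow_two_thirds_three_mul_pi_le : ((3 * π) ^ ((2 : ℝ) / 3)) ^ 2 ≤ 20 := by
  set P := (3 * π) ^ ((2 : ℝ) / 3)
  have hP3 : P ^ 3 = (3 * π) ^ 2 := by
    rw [← rpow_natCast, ← rpow_mul (by positivity)]
    norm_num
  have hP : P ≤ 447 / 100 :=
    le_of_pow_le_pow_left₀ three_ne_zero (by norm_num)
      (by rw [hP3]; nlinarith [pi_lt_d4, pi_pos])
  nlinarith [show 0 ≤ P by positivity]

lemma mul_cube_mul_sub_le {a : ℝ} (ha₁ : 5 / 4 ≤ a) (ha₂ : a ≤ 13 / 10) (w : ℝ) :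
    80 * w ^ 3 * (a - w) ≤ 9 * (a ^ 2 + a * w + w ^ 2) := by
  have ha0 : 0 ≤ a := by linarith
  nlinarith [sq_nonneg (4 * w ^ 2 - 2 * a * w - 1), sq_nonneg (30 * w - 11 * a), sq_nonneg w,
    mul_le_mul ha₁ ha₁ (by norm_num) ha0, mul_le_mul ha₂ ha₂ ha0 (by norm_num)]

lemma two_mul_cube_mul_sub_le {P a w s : ℝ} (hP : P ^ 2 ≤ 20) (ha : a ^ 3 = 2)
    (hw : 0 ≤ w) (hwa : w ≤ a) (hs : 0 ≤ s) (hs2 : s ^ 2 = w ^ 3 * (2 - w ^ 3)) :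
    2 * P * w ^ 3 * (a - w) ≤ 3 * s := by
  have ha₁ : 5 / 4 ≤ a :=
    le_of_pow_le_pow_left₀ three_ne_zero (by linarith) (by rw [ha]; norm_num)
  have ha₂ : a ≤ 13 / 10 :=
    le_of_pow_le_pow_left₀ three_ne_zero (by norm_num) (by rw [ha]; norm_num)
  have hx : 0 ≤ w ^ 3 * (a - w) := mul_nonneg (by positivity) (by linarith)
  have hpoly := mul_le_mul_of_nonneg_left (mul_cube_mul_sub_le ha₁ ha₂ w) hx
  refine le_of_pow_le_pow_left₀ two_ne_zero (by positivity) ?_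
  calc (2 * P * w ^ 3 * (a - w)) ^ 2 = 4 * P ^ 2 * (w ^ 3 * (a - w)) ^ 2 := by ring
    _ ≤ 80 * (w ^ 3 * (a - w)) ^ 2 := by gcongr; linarith
    _ ≤ 9 * (w ^ 3 * ((a - w) * (a ^ 2 + a * w + w ^ 2))) := by linear_combination hpoly
    _ = (3 * s) ^ 2 := by rw [mul_pow, hs2, ← ha]; ring

lemma two_mul_one_sub_cos_mul_le_three_mul_sin {P t : ℝ} (hP : P ^ 2 ≤ 20)
    (ht0 : 0 < t) (htpi : t < π) :
    2 * P * (1 - cos t) * ((2 : ℝ) ^ ((1 : ℝ) / 3) - (1 - cos t) ^ ((1 : ℝ) / 3))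
      ≤ 3 * sin t := by
  have hc : 0 ≤ 1 - cos t := by linarith [cos_le_one t]
  have hc2 : 1 - cos t ≤ 2 := by linarith [neg_one_le_cos t]
  have hw3 := rpow_one_third_pow_three hc
  have key := two_mul_cube_mul_sub_le hP (rpow_one_third_pow_three zero_le_two)
    (by positivity) (rpow_le_rpow hc hc2 (by norm_num)) (sin_pos_of_pos_of_lt_pi ht0 htpi).le
    (by rw [hw3, sin_sq]; ring)
  rwa [hw3] at key

theorem stmt5 (v t : ℝ) (hv : 27 ≤ v) (ht0 : 0 < t) (htpi : t < π) :
    v * Real.sin t / (1 - Real.cos t)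
      + 2 * (3 * π) ^ ((2 : ℝ) / 3) * v ^ ((2 : ℝ) / 3) * (1 - Real.cos t) ^ ((1 : ℝ) / 3)
    ≥ (2 : ℝ) ^ ((4 : ℝ) / 3) * (3 * π) ^ ((2 : ℝ) / 3) * v ^ ((2 : ℝ) / 3) := by
  have hc : 0 < 1 - cos t := by
    have := cos_lt_cos_of_nonneg_of_le_pi le_rfl htpi.le ht0
    rw [cos_zero] at this
    linarith
  have h24 : (2 : ℝ) ^ ((4 : ℝ) / 3) = 2 * 2 ^ ((1 : ℝ) / 3) := by
    rw [show (4 : ℝ) / 3 = 1 + 1 / 3 by norm_num, rpow_add two_pos, rpow_one]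
  have hv_split : v ^ ((1 : ℝ) / 3) * v ^ ((2 : ℝ) / 3) = v := by
    rw [← rpow_add (by linarith)]
    norm_num
  have key := two_mul_one_sub_cos_mul_le_three_mul_sin sq_rpow_two_thirds_three_mul_pi_le ht0 htpi
  have hsin : 0 ≤ sin t := (sin_pos_of_pos_of_lt_pi ht0 htpi).le
  have hstep : 2 * (3 * π) ^ ((2 : ℝ) / 3) * v ^ ((2 : ℝ) / 3)
      * ((2 : ℝ) ^ ((1 : ℝ) / 3) - (1 - cos t) ^ ((1 : ℝ) / 3)) ≤ v * sin t / (1 - cos t) := by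
    rw [le_div_iff₀ hc]
    calc _ = v ^ ((2 : ℝ) / 3) * (2 * (3 * π) ^ ((2 : ℝ) / 3) * (1 - cos t)
          * ((2 : ℝ) ^ ((1 : ℝ) / 3) - (1 - cos t) ^ ((1 : ℝ) / 3))) := by ring
      _ ≤ v ^ ((2 : ℝ) / 3) * (3 * sin t) := by gcongr
      _ ≤ v ^ ((2 : ℝ) / 3) * (v ^ ((1 : ℝ) / 3) * sin t) := by
        gcongr; exact three_le_rpow_one_third hv
      _ = v ^ ((1 : ℝ) / 3) * v ^ ((2 : ℝ) / 3) * sin t := by ring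
      _ = v * sin t := by rw [hv_split]
  rw [ge_iff_le, h24]
  linarith
end
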